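/- Beck–Teboulle sublinear convergence of ISTA: let F(z) = f(z) + g(z) with f(z) = (1/2)‖x − Dz‖₂² and g(z) = λ‖z‖₁, let α ≥ ‖D‖², and define the iterates z^{k+1} = π_{λ/α}(z^k − (1/α)∇f(z^k)) starting from z⁰ = 0. Then for every minimizer z* of F and every T ≥ 1, F(z^T) − F(z*) ≤ (α/(2T))‖z⁰ − z*‖₂² = (α/(2T))‖z*‖₂². -/

import Mathlib

/-! ISTA is proximal gradient descent for `F = f + g`, `f z = ½‖x - D z‖²`, `g = λ‖·‖₁`:
soft-thresholding is the proximal map of `(λ/α)‖·‖₁`, and `f` lies below its quadratic model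
with curvature `‖D‖² ≤ α` and above its tangent plane. Together these give, for one step `a ↦ u`
and every `w`, the three-point inequality `F u - F w ≤ α/2 (‖a - w‖² - ‖u - w‖²)`. Taking
`w = a` shows that `F` decreases along the iterates; taking `w = z*` and summing over the first
`T` steps telescopes to `T (F z_T - F z*) ≤ α/2 ‖z₀ - z*‖²`. -/

noncomputable def softVec {q : ℕ} (t : ℝ) (v : EuclideanSpace ℝ (Fin q)) :
    EuclideanSpace ℝ (Fin q) := WithLp.toLp 2 (fun i => Real.sign (v i) * max 0 (|v i| - t))

open RealInnerProductSpace

noncomputable def softThreshold (t v : ℝ) : ℝ := Real.sign v * max 0 (|v| - t)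

/-- `v - softThreshold t v` is a subgradient of `t * |·|` at `softThreshold t v`. -/
theorem softThreshold_variational {t : ℝ} (ht : 0 ≤ t) (v w : ℝ) :
    t * |softThreshold t v| + (v - softThreshold t v) * (w - softThreshold t v) ≤ t * |w| := by
  rcases le_or_gt |v| t with hvt | hvt
  · have hvw : v * w ≤ t * |w| :=
      calc v * w ≤ |v| * |w| := abs_mul v w ▸ le_abs_self _
        _ ≤ t * |w| := by gcongr
    simpa [softThreshold, max_eq_left (sub_nonpos.2 hvt)] using hvw
  · rcases lt_or_gt_of_ne (abs_pos.1 (ht.trans_lt hvt)) with hv | hv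
    · rw [abs_of_neg hv] at hvt
      have hs : softThreshold t v = v + t := by
        simp only [softThreshold, Real.sign_of_neg hv, abs_of_neg hv]
        rw [max_eq_right (by linarith)]; ring
      rw [hs, abs_of_neg (by linarith)]
      nlinarith [neg_abs_le w]
    · rw [abs_of_pos hv] at hvt
      have hs : softThreshold t v = v - t := by
        simp only [softThreshold, Real.sign_of_pos hv, abs_of_pos hv]
        rw [max_eq_right (by linarith)]; ring
      rw [hs, abs_of_pos (by linarith)]
      nlinarith [le_abs_self w]

theorem softVec_apply {q : ℕ} (t : ℝ) (v : EuclideanSpace ℝ (Fin q)) (i : Fin q) :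
    softVec t v i = softThreshold t (v i) := rfl

theorem softVec_variational {q : ℕ} {t : ℝ} (ht : 0 ≤ t) (v w : EuclideanSpace ℝ (Fin q)) :
    t * ∑ i, |softVec t v i| + ⟪v - softVec t v, w - softVec t v⟫ ≤ t * ∑ i, |w i| := by
  simp only [PiLp.inner_apply, Finset.mul_sum, ← Finset.sum_add_distrib]
  refine Finset.sum_le_sum fun i _ => ?_
  simpa only [softVec_apply, PiLp.sub_apply, Real.inner_apply, mul_comm] using
    softThreshold_variational ht (v i) (w i)

theorem sub_le_of_proxGrad_step {E : Type*} [NormedAddCommGroup E] [InnerProductSpace ℝ E]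
    {f g : E → ℝ} {α : ℝ} {G a u w : E}
    (hupper : f u ≤ f a + ⟪G, u - a⟫ + α / 2 * ‖u - a‖ ^ 2)
    (hlower : f a + ⟪G, w - a⟫ ≤ f w)
    (hprox : g u + ⟪α • (a - u) - G, w - u⟫ ≤ g w) :
    f u + g u - (f w + g w) ≤ α / 2 * (‖a - w‖ ^ 2 - ‖u - w‖ ^ 2) := by
  have hthree : ‖a - w‖ ^ 2 - ‖u - w‖ ^ 2 = ‖u - a‖ ^ 2 + 2 * ⟪a - u, u - w⟫ := by
    rw [show a - w = (a - u) + (u - w) by abel, norm_add_sq_real, ← norm_neg (a - u), neg_sub]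
    ring
  have hG : ⟪G, u - a⟫ - ⟪G, w - a⟫ = -⟪G, w - u⟫ := by
    rw [← inner_sub_right, ← inner_neg_right]; congr 1; abel
  have hsub : ⟪α • (a - u) - G, w - u⟫ = -α * ⟪a - u, u - w⟫ - ⟪G, w - u⟫ := by
    rw [inner_sub_left, real_inner_smul_left, ← neg_sub u w, inner_neg_right]; ring
  rw [hthree]
  linarith

theorem half_norm_sub_apply_sq_eq {E F : Type*} [NormedAddCommGroup E] [InnerProductSpace ℝ E]
    [CompleteSpace E] [NormedAddCommGroup F] [InnerProductSpace ℝ F] [CompleteSpace F]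
    (D : E →L[ℝ] F) (x : F) (a b : E) :
    1 / 2 * ‖x - D b‖ ^ 2 = 1 / 2 * ‖x - D a‖ ^ 2 + ⟪D.adjoint (D a - x), b - a⟫
      + 1 / 2 * ‖D (b - a)‖ ^ 2 := by
  rw [show x - D b = -(D a - x) - D (b - a) by rw [map_sub]; abel, norm_sub_sq_real,
    norm_neg, inner_neg_left, ContinuousLinearMap.adjoint_inner_left, norm_sub_rev x]
  ring

theorem mul_sub_le_of_three_point {E : Type*} [SeminormedAddCommGroup E] {F : E → ℝ} {c : ℝ}
    (hc : 0 ≤ c) {z : ℕ → E}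
    (hstep : ∀ k w, F (z (k + 1)) - F w ≤ c * (‖z k - w‖ ^ 2 - ‖z (k + 1) - w‖ ^ 2))
    (w : E) (T : ℕ) : T * (F (z T) - F w) ≤ c * ‖z 0 - w‖ ^ 2 := by
  have hanti : Antitone (fun k => F (z k)) := antitone_nat_of_succ_le fun k => by
    have := hstep k (z k)
    rw [sub_self, norm_zero] at this
    nlinarith [sq_nonneg ‖z (k + 1) - z k‖]
  calc T * (F (z T) - F w)
    _ = ∑ k ∈ Finset.range T, (F (z T) - F w) := by
      rw [Finset.sum_const, Finset.card_range, nsmul_eq_mul]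
    _ ≤ ∑ k ∈ Finset.range T, (F (z (k + 1)) - F w) :=
      Finset.sum_le_sum fun k hk => by
        have := hanti (Nat.succ_le_of_lt (Finset.mem_range.1 hk))
        linarith
    _ ≤ ∑ k ∈ Finset.range T, c * (‖z k - w‖ ^ 2 - ‖z (k + 1) - w‖ ^ 2) :=
      Finset.sum_le_sum fun k _ => hstep k w
    _ = c * (‖z 0 - w‖ ^ 2 - ‖z T - w‖ ^ 2) := by
      rw [← Finset.mul_sum, Finset.sum_range_sub' (fun k => ‖z k - w‖ ^ 2)]
    _ ≤ c * ‖z 0 - w‖ ^ 2 := by nlinarith [sq_nonneg ‖z T - w‖]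

theorem ista_step_sub_le {m q : ℕ} (D : EuclideanSpace ℝ (Fin q) →L[ℝ] EuclideanSpace ℝ (Fin m))
    (x : EuclideanSpace ℝ (Fin m)) {lam α : ℝ} (hlam : 0 ≤ lam) (hα0 : 0 < α) (hα : ‖D‖ ^ 2 ≤ α)
    (a w : EuclideanSpace ℝ (Fin q)) :
    let u := softVec (lam / α) (a - (1 / α) • D.adjoint (D a - x))
    (1 / 2 * ‖x - D u‖ ^ 2 + lam * ∑ i, |u i|) - (1 / 2 * ‖x - D w‖ ^ 2 + lam * ∑ i, |w i|)
      ≤ α / 2 * (‖a - w‖ ^ 2 - ‖u - w‖ ^ 2) := by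
  intro u
  set G := D.adjoint (D a - x)
  refine sub_le_of_proxGrad_step (f := fun b => 1 / 2 * ‖x - D b‖ ^ 2)
    (g := fun b => lam * ∑ i, |b i|) (G := G) ?upper ?lower ?prox
  case upper =>
    have hD : ‖D (u - a)‖ ^ 2 ≤ α * ‖u - a‖ ^ 2 :=
      calc ‖D (u - a)‖ ^ 2 ≤ (‖D‖ * ‖u - a‖) ^ 2 := by gcongr; exact D.le_opNorm _
        _ ≤ α * ‖u - a‖ ^ 2 := by rw [mul_pow]; gcongr
    rw [half_norm_sub_apply_sq_eq D x a u]
    linarith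
  case lower =>
    rw [half_norm_sub_apply_sq_eq D x a w]
    linarith [sq_nonneg ‖D (w - a)‖]
  case prox =>
    have hv := softVec_variational (div_nonneg hlam hα0.le) (a - (1 / α) • G) w
    have hgrad : α • (a - u) - G = α • (a - (1 / α) • G - u) := by
      rw [smul_sub, smul_sub, smul_sub, smul_smul, mul_one_div_cancel hα0.ne', one_smul]
      abel
    rw [hgrad, real_inner_smul_left]
    have := mul_le_mul_of_nonneg_left hv hα0.le
    rwa [mul_add, ← mul_assoc, ← mul_assoc, mul_div_cancel₀ _ hα0.ne'] at this

theorem stmt_11_general {m q : ℕ}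
    (D : EuclideanSpace ℝ (Fin q) →L[ℝ] EuclideanSpace ℝ (Fin m))
    (x : EuclideanSpace ℝ (Fin m)) (lam α : ℝ)
    (hlam : 0 < lam) (hα0 : 0 < α) (hα : ‖D‖^2 ≤ α)
    (z : ℕ → EuclideanSpace ℝ (Fin q)) (h0 : z 0 = 0)
    (hiter : ∀ k, z (k+1) =
      softVec (lam/α) (z k - (1/α) • (ContinuousLinearMap.adjoint D) (D (z k) - x)))
    (zs : EuclideanSpace ℝ (Fin q))
    (T : ℕ) (hT : 1 ≤ T) :
    ((1/2) * ‖x - D (z T)‖^2 + lam * ∑ i, |z T i|) -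
      ((1/2) * ‖x - D zs‖^2 + lam * ∑ i, |zs i|) ≤ α / (2 * T) * ‖zs‖^2 := by
  have hrate := mul_sub_le_of_three_point (F := fun w => 1 / 2 * ‖x - D w‖ ^ 2 + lam * ∑ i, |w i|)
    (half_pos hα0).le (fun k w => hiter k ▸ ista_step_sub_le D x hlam.le hα0 hα (z k) w) zs T
  rw [h0, zero_sub, norm_neg] at hrate
  have hT0 : (0 : ℝ) < T := by exact_mod_cast hT
  rw [show α / (2 * T) * ‖zs‖ ^ 2 = α / 2 * ‖zs‖ ^ 2 / T by ring, le_div_iff₀ hT0]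
  linarith

/-- Beck–Teboulle sublinear convergence of ISTA. -/
theorem stmt_11 {m q : ℕ}
    (D : EuclideanSpace ℝ (Fin q) →L[ℝ] EuclideanSpace ℝ (Fin m))
    (x : EuclideanSpace ℝ (Fin m)) (lam α : ℝ)
    (hlam : 0 < lam) (hα0 : 0 < α) (hα : ‖D‖^2 ≤ α)
    (z : ℕ → EuclideanSpace ℝ (Fin q)) (h0 : z 0 = 0)
    (hiter : ∀ k, z (k+1) =
      softVec (lam/α) (z k - (1/α) • (ContinuousLinearMap.adjoint D) (D (z k) - x)))
    (zs : EuclideanSpace ℝ (Fin q))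
    (hzs : ∀ w : EuclideanSpace ℝ (Fin q),
      (1/2) * ‖x - D zs‖^2 + lam * ∑ i, |zs i| ≤ (1/2) * ‖x - D w‖^2 + lam * ∑ i, |w i|)
    (T : ℕ) (hT : 1 ≤ T) :
    ((1/2) * ‖x - D (z T)‖^2 + lam * ∑ i, |z T i|) -
      ((1/2) * ‖x - D zs‖^2 + lam * ∑ i, |zs i|) ≤ α / (2 * T) * ‖zs‖^2 :=
  stmt_11_general D x lam α hlam hα0 hα z h0 hiter zs T hT
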